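/- Let F(u) = (1/(2n))(1-u²)^n with n ≥ p > 1. Then ∫₀^{s̄} (F(s) - F(s̄))^{-1/p} ds → +∞ as s̄ → 1⁻. -/

import Mathlib

/-!
Since `1 - s² ≤ 2 (1 - s)` and `n ≥ p`, `F(s) ≤ C (1 - s)ᵖ`, so the integrand is at least
`C^(-1/p) (1 - s)⁻¹`, whose integral over `(0, s̄)` is `-C^(-1/p) log (1 - s̄) → ∞`.
The integral is not a junk value: from `aⁿ - bⁿ ≥ bⁿ⁻¹ (a - b)` for `a ≥ b ≥ 0` we get
`F(s) - F(s̄) ≥ m (s̄ - s)` with `m > 0`, so the integrand is `O((s̄ - s)^(-1/p))`,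
which is integrable as `p > 1`.
-/

open MeasureTheory Set Filter Topology Real

lemma rpow_sub_one_mul_sub_le_rpow_sub_rpow {a b n : ℝ} (hb : 0 ≤ b) (hba : b ≤ a)
    (hn : 1 ≤ n) : b ^ (n - 1) * (a - b) ≤ a ^ n - b ^ n := by
  have hsplit : ∀ x : ℝ, 0 ≤ x → x ^ n = x ^ (n - 1) * x := fun x hx => by
    conv_lhs => rw [← sub_add_cancel n 1]
    rw [rpow_add' hx (by linarith), rpow_one]
  have hmono : b ^ (n - 1) ≤ a ^ (n - 1) := rpow_le_rpow hb hba (by linarith)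
  rw [hsplit a (hb.trans hba), hsplit b hb]
  nlinarith [rpow_nonneg hb (n - 1)]

lemma mul_rpow_neg_inv_le_rpow_neg_inv {K x y p : ℝ} (hK : 0 ≤ K) (hx : 0 ≤ x) (hp : 0 < p)
    (hy : 0 < y) (hyx : y ≤ K * x ^ p) : K ^ (-(1 / p)) * x⁻¹ ≤ y ^ (-(1 / p)) := by
  calc K ^ (-(1 / p)) * x⁻¹ = (K * x ^ p) ^ (-(1 / p)) := by
        rw [mul_rpow hK (rpow_nonneg hx p), ← rpow_mul hx, mul_neg, mul_one_div_cancel hp.ne',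
          rpow_neg_one]
    _ ≤ y ^ (-(1 / p)) := rpow_le_rpow_of_nonpos hy hyx (by simp [hp.le])

lemma integrableOn_rpow_neg_of_mul_sub_le {f : ℝ → ℝ} {a b m r : ℝ} (hab : a ≤ b) (hm : 0 < m)
    (hr0 : 0 ≤ r) (hr1 : r < 1) (hf : ContinuousOn f (Ioo a b))
    (hfm : ∀ s ∈ Ioo a b, m * (b - s) ≤ f s) :
    IntegrableOn (fun s => f s ^ (-r)) (Ioo a b) := by
  have hpos : ∀ s ∈ Ioo a b, 0 < m * (b - s) := fun s hs => mul_pos hm (sub_pos.2 hs.2)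
  have hdom : IntegrableOn (fun s => m ^ (-r) * (b - s) ^ (-r)) (Ioo a b) := by
    rw [← intervalIntegrable_iff_integrableOn_Ioo_of_le hab]
    refine IntervalIntegrable.const_mul ?_ _
    simpa using ((intervalIntegral.intervalIntegrable_rpow' (a := b - b) (b := b - a)
      (neg_lt_neg hr1)).comp_sub_left b).symm
  have hmeas : AEStronglyMeasurable (fun s => f s ^ (-r)) (volume.restrict (Ioo a b)) :=
    (hf.rpow_const fun s hs => Or.inl ((hpos s hs).trans_le (hfm s hs)).ne').aestronglyMeasurable
      measurableSet_Ioo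
  refine hdom.mono' hmeas ?_
  filter_upwards [ae_restrict_mem measurableSet_Ioo] with s hs
  rw [norm_of_nonneg (rpow_nonneg ((hpos s hs).le.trans (hfm s hs)) _),
    ← mul_rpow hm.le (sub_pos.2 hs.2).le]
  exact rpow_le_rpow_of_nonpos (hpos s hs) (hfm s hs) (by linarith)

lemma integral_Ioo_inv_one_sub {x : ℝ} (hx0 : 0 ≤ x) (hx1 : x < 1) :
    ∫ s in Ioo 0 x, (1 - s)⁻¹ = -log (1 - x) := by
  rw [← integral_Ioc_eq_integral_Ioo, ← intervalIntegral.integral_of_le hx0,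
    intervalIntegral.integral_comp_sub_left (fun s => s⁻¹), sub_zero, integral_inv, log_div,
    log_one]
  · ring
  · norm_num
  · linarith
  · rw [mem_uIcc]; rintro (⟨h, -⟩ | ⟨h, -⟩) <;> linarith

lemma tendsto_neg_log_one_sub_nhdsLT_one :
    Tendsto (fun x => -log (1 - x)) (𝓝[<] 1) atTop := by
  have h : Tendsto (fun x : ℝ => 1 - x) (𝓝[<] 1) (𝓝[>] 0) := by
    have := (continuous_sub_left (1 : ℝ)).continuousWithinAt (s := Iio 1) (x := 1)
    simpa using this.tendsto_nhdsWithin (t := Ioi 0) fun x hx => sub_pos.2 hx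
  exact tendsto_neg_atBot_atTop.comp (tendsto_log_nhdsGT_zero.comp h)

noncomputable def potential (n u : ℝ) : ℝ := 1 / (2 * n) * (1 - u ^ 2) ^ n

lemma continuous_potential {n : ℝ} (hn : 0 < n) : Continuous (potential n) := by
  have := hn.le
  unfold potential
  fun_prop (disch := assumption)

lemma potential_nonneg {n u : ℝ} (hn : 0 ≤ n) (hu : u ^ 2 ≤ 1) : 0 ≤ potential n u := by
  unfold potential
  have : 0 ≤ 1 - u ^ 2 := by linarith
  positivity

lemma potential_le {n p s : ℝ} (hpn : p ≤ n) (hp : 0 < p) (hs0 : 0 ≤ s) (hs1 : s ≤ 1) :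
    potential n s ≤ 2 ^ n / (2 * n) * (1 - s) ^ p := by
  have hn : 0 < n := hp.trans_le hpn
  have h1s : 0 ≤ 1 - s := by linarith
  calc potential n s ≤ 1 / (2 * n) * (2 * (1 - s)) ^ n := by
        unfold potential
        gcongr
        · nlinarith
        · nlinarith
    _ = 2 ^ n / (2 * n) * (1 - s) ^ n := by rw [mul_rpow zero_le_two h1s]; ring
    _ ≤ 2 ^ n / (2 * n) * (1 - s) ^ p :=
        mul_le_mul_of_nonneg_left
          (rpow_le_rpow_of_exponent_ge' h1s (by linarith) hp.le hpn) (by positivity)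

lemma mul_sub_le_potential_sub_potential {n s t : ℝ} (hn : 1 ≤ n) (hs : 0 ≤ s) (hst : s ≤ t)
    (ht : t ≤ 1) :
    1 / (2 * n) * (1 - t ^ 2) ^ (n - 1) * t * (t - s) ≤ potential n s - potential n t := by
  have hb : 0 ≤ 1 - t ^ 2 := by nlinarith
  have hsq : t * (t - s) ≤ (1 - s ^ 2) - (1 - t ^ 2) := by nlinarith
  have key := rpow_sub_one_mul_sub_le_rpow_sub_rpow hb (by nlinarith : 1 - t ^ 2 ≤ 1 - s ^ 2) hn
  have hc : 0 ≤ 1 / (2 * n) := by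
    have : (0:ℝ) < n := by linarith
    positivity
  unfold potential
  calc 1 / (2 * n) * (1 - t ^ 2) ^ (n - 1) * t * (t - s)
      = 1 / (2 * n) * ((1 - t ^ 2) ^ (n - 1) * (t * (t - s))) := by ring
    _ ≤ 1 / (2 * n) * ((1 - t ^ 2) ^ (n - 1) * ((1 - s ^ 2) - (1 - t ^ 2))) := by
        gcongr
    _ ≤ 1 / (2 * n) * ((1 - s ^ 2) ^ n - (1 - t ^ 2) ^ n) := by gcongr
    _ = _ := by ring

lemma mul_neg_log_one_sub_le_integral_potential {n p t : ℝ} (hp : 1 < p) (hpn : p ≤ n)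
    (ht0 : 0 < t) (ht1 : t < 1) :
    (2 ^ n / (2 * n)) ^ (-(1 / p)) * -log (1 - t) ≤
      ∫ s in Ioo 0 t, (potential n s - potential n t) ^ (-(1 / p)) := by
  have hn : 1 ≤ n := by linarith
  set K := 2 ^ n / (2 * n)
  set m := 1 / (2 * n) * (1 - t ^ 2) ^ (n - 1) * t
  have hm : 0 < m := by
    have : 0 < 1 - t ^ 2 := by nlinarith
    have : 0 < n := by linarith
    positivity
  have hlow : ∀ s ∈ Ioo 0 t, m * (t - s) ≤ potential n s - potential n t := fun s hs =>
    mul_sub_le_potential_sub_potential hn hs.1.le hs.2.le ht1.le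
  have hup : ∀ s ∈ Ioo 0 t, potential n s - potential n t ≤ K * (1 - s) ^ p := fun s hs => by
    have := potential_le hpn (by linarith) hs.1.le (hs.2.trans ht1).le
    have := potential_nonneg (u := t) (by linarith : (0 : ℝ) ≤ n) (by nlinarith)
    linarith
  have hint : IntegrableOn (fun s => (potential n s - potential n t) ^ (-(1 / p))) (Ioo 0 t) :=
    integrableOn_rpow_neg_of_mul_sub_le ht0.le hm (by positivity) ((div_lt_one (by linarith)).2 hp)
      ((continuous_potential (by linarith)).continuousOn.sub continuousOn_const) hlow
  have hint' : IntegrableOn (fun s => K ^ (-(1 / p)) * (1 - s)⁻¹) (Ioo 0 t) := by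
    refine (ContinuousOn.integrableOn_Icc ?_).mono_set Ioo_subset_Icc_self
    exact continuousOn_const.mul <| (continuousOn_const.sub continuousOn_id).inv₀
      fun s hs => (sub_pos.2 (hs.2.trans_lt ht1)).ne'
  calc K ^ (-(1 / p)) * -log (1 - t) = ∫ s in Ioo 0 t, K ^ (-(1 / p)) * (1 - s)⁻¹ := by
        rw [integral_const_mul, integral_Ioo_inv_one_sub ht0.le ht1]
    _ ≤ ∫ s in Ioo 0 t, (potential n s - potential n t) ^ (-(1 / p)) :=
        setIntegral_mono_on hint' hint measurableSet_Ioo fun s hs =>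
          mul_rpow_neg_inv_le_rpow_neg_inv (by positivity) (sub_pos.2 (hs.2.trans ht1)).le
            (by linarith) ((mul_pos hm (sub_pos.2 hs.2)).trans_le (hlow s hs)) (hup s hs)

theorem period_integral_diverges (n p : ℝ) (hp : 1 < p) (hnp : p ≤ n)
    (F : ℝ → ℝ) (hF : ∀ u, F u = (1 / (2 * n)) * (1 - u ^ 2) ^ n) :
    Tendsto (fun sbar => ∫ s in Ioo 0 sbar, (F s - F sbar) ^ (-(1 / p)))
      (nhdsWithin 1 (Iio 1)) atTop := by
  obtain rfl : F = potential n := funext hF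
  have hK : 0 < (2 ^ n / (2 * n)) ^ (-(1 / p)) := by
    have : 0 < n := by linarith
    positivity
  refine tendsto_atTop_mono' _ ?_ (tendsto_neg_log_one_sub_nhdsLT_one.const_mul_atTop hK)
  filter_upwards [Ioo_mem_nhdsLT zero_lt_one] with t ht
  exact mul_neg_log_one_sub_le_integral_potential hp hnp ht.1 ht.2
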